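/- Let U and V be F_2-vector spaces, x ∈ U, y ∈ V with y ≠ 0, let A ⊆ U and B ⊆ V be subspaces, and let W, W' be subspaces of a complement H of U ⊗ (span y ⊕ B') inside U ⊗ V, where B' is a complement of span y in V containing B. If x ⊗ y ∈ (A ⊗ span y ⊕ W) + (A' ⊗ span y ⊕ W') for subspaces A, A' of U and W, W' ⊆ H, then x ∈ A + A'. -/
import Mathlib


open TensorProduct

/-- In `U ⊗ V` over `𝔽₂`, write `u ⊗ y` via the map `ty : u ↦ u ⊗ y`. Given
`y ≠ 0`, a complement `B'` of `span y` in `V` containing `B`, and a complement `H` of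
`U ⊗ span y` in `U ⊗ V` (here `U ⊗ span y = range ty = map ty ⊤`), with `W, W' ⊆ H`:
if `x ⊗ y ∈ (A ⊗ span y ⊕ W) + (A' ⊗ span y ⊕ W')`, then `x ∈ A + A'`. -/
theorem stmt3 (U V : Type) [AddCommGroup U] [AddCommGroup V]
    [Module (ZMod 2) U] [Module (ZMod 2) V]
    [FiniteDimensional (ZMod 2) U] [FiniteDimensional (ZMod 2) V]
    (x : U) (y : V) (hy : y ≠ 0)
    (A A' : Submodule (ZMod 2) U) (B B' : Submodule (ZMod 2) V)
    (hB' : IsCompl (Submodule.span (ZMod 2) {y}) B') (hB : B ≤ B')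
    (H W W' : Submodule (ZMod 2) (U ⊗[ZMod 2] V))
    (hH : IsCompl (Submodule.map ((TensorProduct.mk (ZMod 2) U V).flip y) ⊤) H)
    (hW : W ≤ H) (hW' : W' ≤ H)
    (hx : ((TensorProduct.mk (ZMod 2) U V).flip y) x ∈
      (Submodule.map ((TensorProduct.mk (ZMod 2) U V).flip y) A ⊔ W)
        ⊔ (Submodule.map ((TensorProduct.mk (ZMod 2) U V).flip y) A' ⊔ W')) :
    x ∈ A ⊔ A' := by
  set ty := (TensorProduct.mk (ZMod 2) U V).flip y with hty
  -- a functional f : V → ZMod 2 with f y = 1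
  let f : V →ₗ[ZMod 2] ZMod 2 :=
    (LinearEquiv.toSpanNonzeroSingleton (ZMod 2) V y hy).symm.toLinearMap ∘ₗ
      (Submodule.span (ZMod 2) {y}).linearProjOfIsCompl B' hB'
  have hfy : f y = 1 := by
    have h1 : (Submodule.span (ZMod 2) {y}).linearProjOfIsCompl B' hB' y =
        ⟨y, Submodule.mem_span_singleton_self y⟩ :=
      Submodule.linearProjOfIsCompl_apply_left hB' ⟨y, Submodule.mem_span_singleton_self y⟩
    simp only [f, LinearMap.comp_apply]
    rw [h1]
    have : (LinearEquiv.toSpanNonzeroSingleton (ZMod 2) V y hy) 1 =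
        ⟨y, Submodule.mem_span_singleton_self y⟩ := by
      apply Subtype.ext
      simp [LinearEquiv.toSpanNonzeroSingleton]
    rw [← this]
    exact (LinearEquiv.toSpanNonzeroSingleton (ZMod 2) V y hy).symm_apply_apply 1
  -- retraction g with g (ty u) = u
  let g : (U ⊗[ZMod 2] V) →ₗ[ZMod 2] U :=
    (TensorProduct.rid (ZMod 2) U).toLinearMap ∘ₗ LinearMap.lTensor U f
  have hg : ∀ u : U, g (ty u) = u := by
    intro u
    simp [g, hty, hfy]
  have hinj : Function.Injective ty := fun a b h => by
    rw [← hg a, ← hg b, h]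
  obtain ⟨p, hp, q, hq, hpq⟩ := Submodule.mem_sup.mp hx
  obtain ⟨p1, hp1, w, hw1, hpw⟩ := Submodule.mem_sup.mp hp
  obtain ⟨q1, hq1, w', hw1', hqw⟩ := Submodule.mem_sup.mp hq
  obtain ⟨a, ha, rfl⟩ := hp1
  obtain ⟨a', ha', rfl⟩ := hq1
  have hmem : ty (x - a - a') ∈ Submodule.map ty ⊤ ⊓ H := by
    constructor
    · exact ⟨x - a - a', trivial, rfl⟩
    · have : ty (x - a - a') = w + w' := by
        have := hpq
        rw [← hpw, ← hqw] at this
        rw [map_sub, map_sub, ← this]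
        abel
      rw [this]
      exact H.add_mem (hW hw1) (hW' hw1')
  rw [hH.inf_eq_bot] at hmem
  have hz : x - a - a' = 0 := by
    apply hinj
    rw [hmem]
    exact (map_zero ty).symm
  rw [sub_sub, sub_eq_zero] at hz
  rw [hz]
  exact Submodule.add_mem_sup ha ha'
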